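/- Let Π be a finite set, f : Π → ℝ^m, and z* ∈ ℝ^m with z*_i < f_i(π) for all π ∈ Π and i. For every Pareto optimal π* ∈ Π there exists a preference λ ∈ ℝ^m with λ_i > 0 and ∑_i λ_i = 1 such that π* minimizes the Chebyshev scalarized cost max_i λ_i (f_i(π) − z*_i) over Π. In particular, one may take λ_i proportional to 1/(f_i(π*) − z*_i). -/

import Mathlib

/-!
Normalise the gaps `f π* i - z i` (all positive) by weighting coordinate `i` with
`t / (f π* i - z i)`: then every term of the Chebyshev cost of `π*` equals `t`. Since `π*` is
Pareto optimal, any other `π` is no better than `π*` in some coordinate `i`, and that single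
term of the Chebyshev cost of `π` is already at least `t`.
-/

open Finset

def Dominates {m : ℕ} (y z : Fin m → ℝ) : Prop :=
  (∀ i, y i ≤ z i) ∧ ∃ i, y i < z i

theorem exists_le_of_not_dominates {m : ℕ} (hm : 0 < m) {y z : Fin m → ℝ}
    (h : ¬ Dominates y z) : ∃ i, z i ≤ y i := by
  by_contra! hlt
  exact h ⟨fun i => (hlt i).le, ⟨0, hm⟩, hlt _⟩

theorem sum_div_eq_one_of_sum_inv {ι : Type*} [Fintype ι] {g : ι → ℝ}
    (hg : ∑ i, (g i)⁻¹ ≠ 0) : ∑ i, (∑ j, (g j)⁻¹)⁻¹ / g i = 1 := by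
  simp_rw [div_eq_mul_inv]
  rw [← mul_sum, inv_mul_cancel₀ hg]

section Chebyshev

variable {ι : Type*}

noncomputable def chebyshevCost (w z y : ι → ℝ) : ℝ :=
  ⨆ i, w i * (y i - z i)

theorem chebyshevCost_eq_of_forall_eq [Nonempty ι] {w z y : ι → ℝ} {t : ℝ}
    (h : ∀ i, w i * (y i - z i) = t) : chebyshevCost w z y = t := by
  simp only [chebyshevCost, h, ciSup_const]

theorem le_chebyshevCost [Finite ι] (w z y : ι → ℝ) (i : ι) :
    w i * (y i - z i) ≤ chebyshevCost w z y :=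
  le_ciSup (f := fun i => w i * (y i - z i)) (Set.finite_range _).bddAbove i

theorem chebyshevCost_le_of_exists_le [Finite ι] [Nonempty ι] {z y₀ y : ι → ℝ} {t : ℝ}
    (ht : 0 < t) (hz : ∀ i, z i < y₀ i) (hle : ∃ i, y₀ i ≤ y i) :
    chebyshevCost (fun i => t / (y₀ i - z i)) z y₀ ≤
      chebyshevCost (fun i => t / (y₀ i - z i)) z y := by
  have hgap : ∀ i, 0 < y₀ i - z i := fun i => sub_pos.2 (hz i)
  rw [chebyshevCost_eq_of_forall_eq fun i => div_mul_cancel₀ t (hgap i).ne']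
  obtain ⟨i, hi⟩ := hle
  calc t = t / (y₀ i - z i) * (y₀ i - z i) := (div_mul_cancel₀ t (hgap i).ne').symm
    _ ≤ t / (y₀ i - z i) * (y i - z i) := by gcongr; exact (div_pos ht (hgap i)).le
    _ ≤ _ := le_chebyshevCost (fun i => t / (y₀ i - z i)) z y i

end Chebyshev

theorem chebyshev_completeness_general {P : Type*}
    {m : ℕ} (hm : 0 < m) (f : P → Fin m → ℝ) (z : Fin m → ℝ)
    (hz : ∀ (π : P) (i : Fin m), z i < f π i) (πstar : P)
    (hpareto : ∀ π : P, ¬ Dominates (f π) (f πstar)) :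
    ∃ lam : Fin m → ℝ, (∀ i, 0 < lam i) ∧ (∑ i, lam i = 1) ∧
      (∀ π : P, (⨆ i, lam i * (f πstar i - z i)) ≤ ⨆ i, lam i * (f π i - z i)) ∧
      (∃ t : ℝ, 0 < t ∧ ∀ i, lam i = t / (f πstar i - z i)) := by
  have : Nonempty (Fin m) := ⟨⟨0, hm⟩⟩
  have hgap : ∀ i, 0 < f πstar i - z i := fun i => sub_pos.2 (hz πstar i)
  have hsum : 0 < ∑ i, (f πstar i - z i)⁻¹ :=
    sum_pos (fun i _ => inv_pos.2 (hgap i)) univ_nonempty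
  set t := (∑ i, (f πstar i - z i)⁻¹)⁻¹
  have ht : 0 < t := inv_pos.2 hsum
  refine ⟨fun i => t / (f πstar i - z i), fun i => div_pos ht (hgap i),
    sum_div_eq_one_of_sum_inv hsum.ne', fun π => ?_, t, ht, fun _ => rfl⟩
  exact chebyshevCost_le_of_exists_le ht (hz πstar) (exists_le_of_not_dominates hm (hpareto π))

/-- Chebyshev scalarization completeness: every Pareto-optimal solution minimizes
some Chebyshev scalarized cost with strictly positive weights summing to one;
in particular one may take `λ i` proportional to `1 / (f πstar i - z i)`. -/
theorem chebyshev_completeness {P : Type*} [Fintype P]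
    {m : ℕ} (hm : 0 < m) (f : P → Fin m → ℝ) (z : Fin m → ℝ)
    (hz : ∀ (π : P) (i : Fin m), z i < f π i) (πstar : P)
    (hpareto : ∀ π : P, ¬ Dominates (f π) (f πstar)) :
    ∃ lam : Fin m → ℝ, (∀ i, 0 < lam i) ∧ (∑ i, lam i = 1) ∧
      (∀ π : P, (⨆ i, lam i * (f πstar i - z i)) ≤ ⨆ i, lam i * (f π i - z i)) ∧
      (∃ t : ℝ, 0 < t ∧ ∀ i, lam i = t / (f πstar i - z i)) :=
  chebyshev_completeness_general hm f z hz πstar hpareto
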